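/- arXiv:2502.04620 — 2 statements merged into one kernel-verified Lean document; each statement's English description precedes it below -/
import Mathlib

section
/- Spin decoupling of the free-fermion Hamiltonian algebra: let S_u = {→X_{u(k)}X_{u(l)}, →Y_{u(k)}Y_{u(l)} : (k,l) an edge of G} and S_d = {→X_{d(k)}X_{d(l)}, →Y_{d(k)}Y_{d(l)} : (k,l) an edge of G}, so S₀ = S_u ∪ S_d. Then every element of g(S_u) commutes with every element of g(S_d), g(S₀) = g(S_u) ⊔ g(S_d) (supremum of Lie subalgebras), the intersection g(S_u) ⊓ g(S_d) is trivial, and dim g(S₀) = dim g(S_u) + dim g(S_d). -/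
open Matrix

attribute [local instance 100] LieRing.ofAssociativeRing

/-- The four 2×2 Pauli matrices: identity, X, Y, Z. -/
noncomputable def pauli : Fin 4 → Matrix (Fin 2) (Fin 2) ℂ
  | 0 => 1
  | 1 => !![0, 1; 1, 0]
  | 2 => !![0, -Complex.I; Complex.I, 0]
  | 3 => !![1, 0; 0, -1]

/-- The matrix of an `n`-qubit Pauli string `p : Fin n → Fin 4`,
the Kronecker product of the `pauli (p i)`. -/
noncomputable def PauliMat {n : ℕ} (p : Fin n → Fin 4) :
    Matrix (Fin n → Fin 2) (Fin n → Fin 2) ℂ :=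
  Matrix.of fun x y => ∏ i, pauli (p i) (x i) (y i)

/-- The Hamiltonian algebra of a set of Pauli strings: the Lie ℝ-subalgebra of the
complex matrices generated by `{I • P(p) : p ∈ S}`. -/
noncomputable def hamAlg {n : ℕ} (S : Set (Fin n → Fin 4)) :
    LieSubalgebra ℝ (Matrix (Fin n → Fin 2) (Fin n → Fin 2) ℂ) :=
  LieSubalgebra.lieSpan ℝ _ ((fun p => Complex.I • PauliMat p) '' S)

/-- The Pauli string `→A_iB_j`: letter `A` at `i`, letter `B` at `j`, `Z` strictly
between `i` and `j`, identity elsewhere. -/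
def ladderString {n : ℕ} (i j : Fin n) (A B : Fin 4) : Fin n → Fin 4 :=
  fun k => if k = i then A else if k = j then B
    else if min i j < k ∧ k < max i j then 3 else 0

/-- The Pauli string `Z_kZ_l`. -/
def zzString {n : ℕ} (k l : Fin n) : Fin n → Fin 4 :=
  fun m => if m = k ∨ m = l then 3 else 0

/-- The Pauli string `Z_k`. -/
def zString {n : ℕ} (k : Fin n) : Fin n → Fin 4 :=
  fun m => if m = k then 3 else 0

/-- A choice of letter: `X` if `c = 0`, `Y` if `c = 1`. -/
def ltr (c : Fin 2) : Fin 4 := if c = 0 then 1 else 2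

/-- The opposite letter: `Y` if `c = 0`, `X` if `c = 1`. -/
def ltrBar (c : Fin 2) : Fin 4 := if c = 0 then 2 else 1

/-- Pauli strings of the Jordan–Wigner transformed hopping terms of one spin species,
with sites embedded via `v : Fin N → Fin (2N)` and hoppings on the edges of `G`. -/
def Sspin {N : ℕ} (G : SimpleGraph (Fin N)) (v : Fin N → Fin (2 * N)) :
    Set (Fin (2 * N) → Fin 4) :=
  {p | ∃ k l : Fin N, G.Adj k l ∧
    (p = ladderString (v k) (v l) 1 1 ∨ p = ladderString (v k) (v l) 2 2)}

/-- Pauli strings of the Jordan–Wigner transformed free fermion model. -/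
def Sfree {N : ℕ} (G : SimpleGraph (Fin N)) (u d : Fin N → Fin (2 * N)) :
    Set (Fin (2 * N) → Fin 4) :=
  Sspin G u ∪ Sspin G d

/-- Pauli strings of the model with a single on-site Coulomb interaction at fermion
site `i0` (interaction term `Z_{u i0} Z_{d i0}`). -/
def Sint {N : ℕ} (G : SimpleGraph (Fin N)) (u d : Fin N → Fin (2 * N)) (i0 : Fin N) :
    Set (Fin (2 * N) → Fin 4) :=
  Sfree G u d ∪ {zzString (u i0) (d i0)}

/-!
Write Pauli letters in symplectic coordinates `(xbit, zbit)` over `ZMod 2`. Away from the qubits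
`s` of one spin species, a Jordan–Wigner hopping string carries at each qubit the parity `Z` of
the letters `X`, `Y` to its right, and it has an even number of such letters. These conditions are
additive in the coordinates, so they survive products of strings, and the Lie algebra of a
species lies in the real span of the non-identity strings satisfying them. For the two species
the symplectic form between such strings vanishes, so they commute, and the only string satisfying
both sets of conditions is the identity, so by linear independence of Pauli strings the two spans
meet in `0`. Commuting Lie subalgebras span their supremum as a vector space, so the dimensions add.
-/

theorem LieSubalgebra.sup_toSubmodule_of_lie_eq_zero {R L : Type*} [CommRing R] [LieRing L]
    [LieAlgebra R L] {K K' : LieSubalgebra R L} (h : ∀ x ∈ K, ∀ y ∈ K', ⁅x, y⁆ = 0) :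
    ((K ⊔ K' : LieSubalgebra R L) : Submodule R L) = (K : Submodule R L) ⊔ K' := by
  obtain ⟨M, hM⟩ := (K.toSubmodule ⊔ K'.toSubmodule).exists_lieSubalgebra_coe_eq_iff.mpr <| by
    intro x y hx hy
    obtain ⟨a, ha, b, hb, rfl⟩ := Submodule.mem_sup.mp hx
    obtain ⟨a', ha', b', hb', rfl⟩ := Submodule.mem_sup.mp hy
    rw [add_lie, lie_add, lie_add, h a ha b' hb', ← lie_skew b a', h a' ha' b hb, neg_zero,
      add_zero, zero_add]
    exact Submodule.add_mem_sup (K.lie_mem ha ha') (K'.lie_mem hb hb')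
  have hKM : K ⊔ K' ≤ M := sup_le
    (fun x hx => by rw [← LieSubalgebra.mem_toSubmodule, hM]; exact Submodule.mem_sup_left hx)
    (fun x hx => by rw [← LieSubalgebra.mem_toSubmodule, hM]; exact Submodule.mem_sup_right hx)
  refine le_antisymm (((toSubmodule_le_toSubmodule _ _).mpr hKM).trans hM.le) (sup_le ?_ ?_)
  · exact (toSubmodule_le_toSubmodule _ _).mpr le_sup_left
  · exact (toSubmodule_le_toSubmodule _ _).mpr le_sup_right

theorem LieSubalgebra.finrank_sup_of_lie_eq_zero {K L : Type*} [Field K] [LieRing L]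
    [LieAlgebra K L] [FiniteDimensional K L] {A B : LieSubalgebra K L}
    (h : ∀ x ∈ A, ∀ y ∈ B, ⁅x, y⁆ = 0) (hAB : A ⊓ B = ⊥) :
    Module.finrank K (A ⊔ B : LieSubalgebra K L) = Module.finrank K A + Module.finrank K B := by
  have hdim := Submodule.finrank_sup_add_finrank_inf_eq A.toSubmodule B.toSubmodule
  rw [← LieSubalgebra.inf_toSubmodule, hAB, LieSubalgebra.bot_toSubmodule, finrank_bot,
    add_zero, ← LieSubalgebra.sup_toSubmodule_of_lie_eq_zero h] at hdim
  exact hdim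

theorem Submodule.commute_of_mem_span {R A : Type*} [CommSemiring R] [Semiring A] [Algebra R A]
    {s t : Set A} (h : ∀ a ∈ s, ∀ b ∈ t, Commute a b) {x y : A} (hx : x ∈ span R s)
    (hy : y ∈ span R t) : Commute x y := by
  refine Algebra.commute_of_mem_adjoin_of_forall_mem_commute (Algebra.span_le_adjoin R t hy)
    fun b hb => ?_
  exact (Algebra.commute_of_mem_adjoin_of_forall_mem_commute (Algebra.span_le_adjoin R s hx)
    fun a ha => (h a ha b hb).symm).symm

def letterMul : Fin 4 → Fin 4 → Fin 4 :=
  ![![0, 1, 2, 3], ![1, 0, 3, 2], ![2, 3, 0, 1], ![3, 2, 1, 0]]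

noncomputable def letterPhase : Fin 4 → Fin 4 → ℂ :=
  ![![1, 1, 1, 1], ![1, 1, Complex.I, -Complex.I], ![1, -Complex.I, 1, Complex.I],
    ![1, Complex.I, -Complex.I, 1]]

/-- Symplectic coordinates of the Pauli letters: `σ_a` is `X ^ xbit a * Z ^ zbit a` up to a
phase. -/
def xbit : Fin 4 → ZMod 2 := ![0, 1, 1, 0]

def zbit : Fin 4 → ZMod 2 := ![0, 0, 1, 1]

def symplecticForm (a b : Fin 4) : ZMod 2 := xbit a * zbit b + zbit a * xbit b

noncomputable def signChar : AddChar (ZMod 2) ℂ :=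
  AddChar.zmodChar 2 (by norm_num : (-1 : ℂ) ^ 2 = 1)

theorem pauli_mul_pauli (a b : Fin 4) :
    pauli a * pauli b = letterPhase a b • pauli (letterMul a b) := by
  fin_cases a <;> fin_cases b <;>
    · ext i j
      fin_cases i <;> fin_cases j <;>
        simp [pauli, letterMul, letterPhase, Matrix.mul_apply, Fin.sum_univ_two]

theorem trace_pauli (a : Fin 4) : (pauli a).trace = if a = 0 then 2 else 0 := by
  fin_cases a <;> simp [pauli, Matrix.trace, Fin.sum_univ_two]

theorem letterMul_self (a : Fin 4) : letterMul a a = 0 := by revert a; decide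

theorem letterMul_comm (a b : Fin 4) : letterMul a b = letterMul b a := by revert a b; decide

theorem eq_of_letterMul_eq_zero {a b : Fin 4} : letterMul a b = 0 → a = b := by
  revert a b; decide

theorem xbit_letterMul (a b : Fin 4) : xbit (letterMul a b) = xbit a + xbit b := by
  revert a b; decide

theorem zbit_letterMul (a b : Fin 4) : zbit (letterMul a b) = zbit a + zbit b := by
  revert a b; decide

theorem eq_zero_of_xbit_eq_zero_of_zbit_eq_zero {a : Fin 4} :
    xbit a = 0 → zbit a = 0 → a = 0 := by
  revert a; decide

theorem letterPhase_self (a : Fin 4) : letterPhase a a = 1 := by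
  fin_cases a <;> rfl

theorem letterPhase_swap (a b : Fin 4) :
    letterPhase b a = signChar (symplecticForm a b) * letterPhase a b := by
  fin_cases a <;> fin_cases b <;>
    simp [letterPhase, symplecticForm, xbit, zbit, signChar, AddChar.zmodChar_apply,
      show ZMod.val (1 : ZMod 2) = 1 from rfl, show (1 + 1 : ZMod 2) = 0 from rfl]

theorem letterPhase_swap_eq_conj (a b : Fin 4) :
    letterPhase b a = starRingEnd ℂ (letterPhase a b) := by
  fin_cases a <;> fin_cases b <;> simp [letterPhase]

section Strings

variable {n : ℕ}

def stringMul (p q : Fin n → Fin 4) : Fin n → Fin 4 := fun i => letterMul (p i) (q i)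

theorem stringMul_comm (p q : Fin n → Fin 4) : stringMul p q = stringMul q p :=
  funext fun i => letterMul_comm (p i) (q i)

theorem PauliMat_mul (p q : Fin n → Fin 4) :
    PauliMat p * PauliMat q = (∏ i, letterPhase (p i) (q i)) • PauliMat (stringMul p q) := by
  ext x y
  simp only [Matrix.mul_apply, PauliMat, stringMul, Matrix.of_apply, Matrix.smul_apply,
    smul_eq_mul, ← Finset.prod_mul_distrib]
  rw [← Fintype.prod_sum fun i t => pauli (p i) (x i) t * pauli (q i) t (y i)]
  refine Finset.prod_congr rfl fun i _ => ?_
  simpa [Matrix.mul_apply] using congrFun₂ (pauli_mul_pauli (p i) (q i)) (x i) (y i)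

theorem trace_PauliMat (p : Fin n → Fin 4) :
    (PauliMat p).trace = ∏ i, (pauli (p i)).trace := by
  simp only [Matrix.trace, Matrix.diag, PauliMat, Matrix.of_apply]
  rw [← Fintype.prod_sum fun i t => pauli (p i) t t]

theorem trace_PauliMat_mul (p q : Fin n → Fin 4) :
    (PauliMat p * PauliMat q).trace = if p = q then (2 : ℂ) ^ n else 0 := by
  rw [PauliMat_mul, Matrix.trace_smul, trace_PauliMat]
  split_ifs with h
  · subst h
    simp [stringMul, letterMul_self, trace_pauli, letterPhase_self]
  · obtain ⟨i, hi⟩ := Function.ne_iff.mp h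
    have hi0 : (pauli (letterMul (p i) (q i))).trace = 0 := by
      rw [trace_pauli, if_neg (mt eq_of_letterMul_eq_zero hi)]
    rw [Finset.prod_eq_zero (f := fun i => (pauli (stringMul p q i)).trace)
      (Finset.mem_univ i) hi0, smul_zero]

theorem linearIndependent_PauliMat : LinearIndependent ℂ (PauliMat (n := n)) := by
  rw [linearIndependent_iff']
  intro s g hsum q hq
  have htrace := congrArg (fun M => (M * PauliMat q).trace) hsum
  simp only [Finset.sum_mul, smul_mul_assoc, Matrix.trace_sum, Matrix.trace_smul,
    trace_PauliMat_mul, smul_eq_mul, mul_ite, mul_zero, Finset.sum_ite_eq', if_pos hq,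
    Matrix.zero_mul, Matrix.trace_zero] at htrace
  exact (mul_eq_zero.mp htrace).resolve_right (pow_ne_zero n two_ne_zero)

theorem linearIndependent_I_smul_PauliMat :
    LinearIndependent ℝ (fun p : Fin n → Fin 4 => Complex.I • PauliMat p) :=
  (linearIndependent_PauliMat.restrict_scalars' ℝ).map'
    ((LinearMap.lsmul ℂ _ Complex.I).restrictScalars ℝ)
    (LinearMap.ker_eq_bot.mpr (smul_right_injective _ Complex.I_ne_zero))

theorem commute_PauliMat_of_sum_symplecticForm_eq_zero {p q : Fin n → Fin 4}
    (h : ∑ i, symplecticForm (p i) (q i) = 0) : Commute (PauliMat p) (PauliMat q) := by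
  have hphase : ∏ i, letterPhase (q i) (p i) = ∏ i, letterPhase (p i) (q i) := by
    have hsign : ∏ i, signChar (symplecticForm (p i) (q i)) = 1 :=
      calc ∏ i, signChar (symplecticForm (p i) (q i))
          = signChar (∑ i, symplecticForm (p i) (q i)) :=
            (map_prod signChar.toMonoidHom (fun i => Multiplicative.ofAdd _) _).symm
        _ = 1 := by rw [h, AddChar.map_zero_eq_one]
    simp only [letterPhase_swap (p _), Finset.prod_mul_distrib, hsign, one_mul]
  rw [Commute, SemiconjBy, PauliMat_mul, PauliMat_mul, hphase, stringMul_comm]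

theorem lie_I_smul_PauliMat (p q : Fin n → Fin 4) :
    ⁅Complex.I • PauliMat p, Complex.I • PauliMat q⁆ =
      (-2 * (∏ i, letterPhase (p i) (q i)).im : ℝ) •
        (Complex.I • PauliMat (stringMul p q)) := by
  set c := ∏ i, letterPhase (p i) (q i)
  have hconj : ∏ i, letterPhase (q i) (p i) = starRingEnd ℂ c := by
    rw [map_prod]
    exact Finset.prod_congr rfl fun i _ => letterPhase_swap_eq_conj _ _
  have hc : -c + starRingEnd ℂ c = ((-2 * c.im : ℝ) : ℂ) * Complex.I := by
    rw [neg_add_eq_sub, ← neg_sub, Complex.sub_conj]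
    push_cast
    ring
  rw [Ring.lie_def, smul_mul_smul_comm, smul_mul_smul_comm, PauliMat_mul, PauliMat_mul, hconj,
    stringMul_comm q p, smul_smul, smul_smul, ← sub_smul, Complex.I_mul_I]
  rw [show -1 * c - -1 * starRingEnd ℂ c = -c + starRingEnd ℂ c by ring, hc, mul_smul,
    Complex.coe_smul]

end Strings

theorem hamAlg_union {n : ℕ} (S T : Set (Fin n → Fin 4)) :
    hamAlg (S ∪ T) = hamAlg S ⊔ hamAlg T := by
  rw [hamAlg, Set.image_union, LieSubalgebra.span_union]
  rfl

section PauliSpan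

variable {n : ℕ} {D : Set (Fin n → Fin 4)}

noncomputable def pauliSpan (D : Set (Fin n → Fin 4)) :
    Submodule ℝ (Matrix (Fin n → Fin 2) (Fin n → Fin 2) ℂ) :=
  Submodule.span ℝ ((fun p => Complex.I • PauliMat p) '' D)

theorem lie_mem_pauliSpan (hD : ∀ p ∈ D, ∀ q ∈ D, p ≠ q → stringMul p q ∈ D)
    {x y : Matrix (Fin n → Fin 2) (Fin n → Fin 2) ℂ} (hx : x ∈ pauliSpan D)
    (hy : y ∈ pauliSpan D) : ⁅x, y⁆ ∈ pauliSpan D := by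
  induction hx, hy using Submodule.span_induction₂ with
  | mem_mem a b ha hb =>
    obtain ⟨p, hp, rfl⟩ := ha
    obtain ⟨q, hq, rfl⟩ := hb
    by_cases hpq : p = q
    · rw [hpq, lie_self]
      exact Submodule.zero_mem _
    · rw [lie_I_smul_PauliMat]
      exact Submodule.smul_mem _ _ (Submodule.subset_span ⟨_, hD p hp q hq hpq, rfl⟩)
  | zero_left y hy => simp
  | zero_right x hx => simp
  | add_left x y z _ _ _ hx hy => simpa only [add_lie] using add_mem hx hy
  | add_right x y z _ _ _ hx hy => simpa only [lie_add] using add_mem hx hy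
  | smul_left r x y _ _ h => simpa only [smul_lie] using Submodule.smul_mem _ r h
  | smul_right r x y _ _ h => simpa only [lie_smul] using Submodule.smul_mem _ r h

theorem hamAlg_toSubmodule_le_pauliSpan {S : Set (Fin n → Fin 4)} (hSD : S ⊆ D)
    (hD : ∀ p ∈ D, ∀ q ∈ D, p ≠ q → stringMul p q ∈ D) :
    (hamAlg S : Submodule ℝ _) ≤ pauliSpan D := by
  obtain ⟨M, hM⟩ := (pauliSpan D).exists_lieSubalgebra_coe_eq_iff.mpr
    fun x y hx hy => lie_mem_pauliSpan hD hx hy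
  rw [← hM, LieSubalgebra.toSubmodule_le_toSubmodule, hamAlg, LieSubalgebra.lieSpan_le]
  intro x hx
  rw [SetLike.mem_coe, ← LieSubalgebra.mem_toSubmodule, hM]
  exact Submodule.subset_span (Set.image_mono hSD hx)

end PauliSpan

section JordanWigner

variable {n : ℕ}

/-- Pauli strings that look, away from the sites `s`, like products of Jordan–Wigner transformed
fermion bilinears on `s`: they have an even number of letters `X`, `Y`, and at each site outside
`s` they carry the parity `Z` of the letters `X`, `Y` to its right. -/
def jwSector (s : Set (Fin n)) : Set (Fin n → Fin 4) :=
  {p | ∑ i, xbit (p i) = 0 ∧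
    ∀ m ∉ s, xbit (p m) = 0 ∧ zbit (p m) = ∑ j ∈ Finset.Ioi m, xbit (p j)}

theorem stringMul_mem_jwSector {s : Set (Fin n)} {p q : Fin n → Fin 4} (hp : p ∈ jwSector s)
    (hq : q ∈ jwSector s) : stringMul p q ∈ jwSector s := by
  simp only [jwSector, Set.mem_ofPred_eq, stringMul, xbit_letterMul, zbit_letterMul,
    Finset.sum_add_distrib] at hp hq ⊢
  refine ⟨by rw [hp.1, hq.1, add_zero], fun m hm => ?_⟩
  obtain ⟨hpx, hpz⟩ := hp.2 m hm
  obtain ⟨hqx, hqz⟩ := hq.2 m hm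
  exact ⟨by rw [hpx, hqx, add_zero], by rw [hpz, hqz]⟩

theorem xbit_ladderString {a b : Fin n} (hab : a ≠ b) {A B : Fin 4} (hA : xbit A = 1)
    (hB : xbit B = 1) (j : Fin n) :
    xbit (ladderString a b A B j) = (if j = a then 1 else 0) + (if j = b then 1 else 0) := by
  unfold ladderString
  split_ifs <;> simp_all [xbit]

theorem ladderString_mem_jwSector {s : Set (Fin n)} {a b : Fin n} (ha : a ∈ s) (hb : b ∈ s)
    (hab : a ≠ b) {A B : Fin 4} (hA : xbit A = 1) (hB : xbit B = 1) :
    ladderString a b A B ∈ jwSector s := by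
  refine ⟨?_, fun m hm => ?_⟩
  · simp only [xbit_ladderString hab hA hB, Finset.sum_add_distrib, Finset.sum_ite_eq',
      Finset.mem_univ, if_true]
    decide
  · have hma : m ≠ a := by rintro rfl; exact hm ha
    have hmb : m ≠ b := by rintro rfl; exact hm hb
    have hletter : ladderString a b A B m = if min a b < m ∧ m < max a b then 3 else 0 := by
      simp [ladderString, hma, hmb]
    simp only [hletter, xbit_ladderString hab hA hB, Finset.sum_add_distrib,
      Finset.sum_ite_eq', Finset.mem_Ioi, min_lt_iff, lt_max_iff]
    rw [Fin.ne_iff_vne] at hma hmb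
    simp only [Fin.lt_def]
    constructor <;> split_ifs <;> first | rfl | omega

theorem sum_symplecticForm_eq_zero_of_mem_jwSector {s t : Set (Fin n)} (hst : Disjoint s t)
    {p q : Fin n → Fin 4} (hp : p ∈ jwSector s) (hq : q ∈ jwSector t) :
    ∑ i, symplecticForm (p i) (q i) = 0 := by
  have hx : ∀ i ∉ s, xbit (p i) = 0 := fun i hi => (hp.2 i hi).1
  have hy : ∀ i ∉ t, xbit (q i) = 0 := fun i hi => (hq.2 i hi).1
  have hxz : ∀ i, xbit (p i) * zbit (q i) = ∑ j ∈ Finset.Ioi i, xbit (p i) * xbit (q j) := by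
    intro i
    by_cases hi : i ∈ s
    · rw [(hq.2 i (Set.disjoint_left.mp hst hi)).2, Finset.mul_sum]
    · simp [hx i hi]
  have hzx : ∀ i, zbit (p i) * xbit (q i) = ∑ j ∈ Finset.Ioi i, xbit (p j) * xbit (q i) := by
    intro i
    by_cases hi : i ∈ t
    · rw [(hp.2 i (Set.disjoint_right.mp hst hi)).2, Finset.sum_mul]
    · simp [hy i hi]
  have hdiag : ∀ i, xbit (p i) * xbit (q i) = 0 := by
    intro i
    by_cases hi : i ∈ s
    · rw [hy i (Set.disjoint_left.mp hst hi), mul_zero]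
    · rw [hx i hi, zero_mul]
  -- The two halves of the symplectic form count the pairs `i < j` and `j < i` of letters `X`, `Y`
  -- of `p` at `i` and of `q` at `j`; the diagonal pairs vanish since `s` and `t` are disjoint.
  calc ∑ i, symplecticForm (p i) (q i)
      = ∑ i, ∑ j ∈ Finset.Ioi i, (xbit (p i) * xbit (q j) + xbit (p j) * xbit (q i)) := by
        simp only [symplecticForm, hxz, hzx, Finset.sum_add_distrib]
    _ = ∑ i, ∑ j ∈ {i}ᶜ, xbit (p i) * xbit (q j) :=
        Finset.sum_sum_Ioi_add_eq_sum_sum_off_diag fun j i => xbit (p i) * xbit (q j)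
    _ = ∑ i, ∑ j, xbit (p i) * xbit (q j) := by
        refine Finset.sum_congr rfl fun i _ => Finset.sum_subset (Finset.subset_univ _) ?_
        intro j _ hj
        rw [Finset.notMem_compl, Finset.mem_singleton] at hj
        rw [hj, hdiag]
    _ = 0 := by rw [← Finset.sum_mul_sum, hq.1, mul_zero]

theorem eq_zero_of_mem_jwSector_of_mem_jwSector {s t : Set (Fin n)} (hst : Disjoint s t)
    {p : Fin n → Fin 4} (hs : p ∈ jwSector s) (ht : p ∈ jwSector t) : p = 0 := by
  have hoff : ∀ m, xbit (p m) = 0 ∧ zbit (p m) = ∑ j ∈ Finset.Ioi m, xbit (p j) := by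
    intro m
    by_cases hm : m ∈ s
    exacts [ht.2 m (Set.disjoint_left.mp hst hm), hs.2 m hm]
  funext m
  refine eq_zero_of_xbit_eq_zero_of_zbit_eq_zero (hoff m).1 ?_
  simp [(hoff m).2, fun j => (hoff j).1]

theorem stringMul_mem_jwSector_diff_zero {s : Set (Fin n)} {p q : Fin n → Fin 4}
    (hp : p ∈ jwSector s \ {0}) (hq : q ∈ jwSector s \ {0}) (hpq : p ≠ q) :
    stringMul p q ∈ jwSector s \ {0} :=
  ⟨stringMul_mem_jwSector hp.1 hq.1, fun h =>
    hpq (funext fun i => eq_of_letterMul_eq_zero (congrFun (Set.mem_singleton_iff.mp h) i))⟩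

theorem commute_of_mem_pauliSpan_jwSector {s t : Set (Fin n)} (hst : Disjoint s t)
    {x y : Matrix (Fin n → Fin 2) (Fin n → Fin 2) ℂ} (hx : x ∈ pauliSpan (jwSector s \ {0}))
    (hy : y ∈ pauliSpan (jwSector t \ {0})) : Commute x y := by
  refine Submodule.commute_of_mem_span ?_ hx hy
  rintro _ ⟨p, hp, rfl⟩ _ ⟨q, hq, rfl⟩
  exact ((commute_PauliMat_of_sum_symplecticForm_eq_zero
    (sum_symplecticForm_eq_zero_of_mem_jwSector hst hp.1 hq.1)).smul_left _).smul_right _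

theorem disjoint_pauliSpan_jwSector {s t : Set (Fin n)} (hst : Disjoint s t) :
    Disjoint (pauliSpan (jwSector s \ {0})) (pauliSpan (jwSector t \ {0})) :=
  linearIndependent_I_smul_PauliMat.disjoint_span_image <| Set.disjoint_left.mpr
    fun _ hs ht => hs.2 (eq_zero_of_mem_jwSector_of_mem_jwSector hst hs.1 ht.1)

theorem Sspin_subset_jwSector {N : ℕ} (G : SimpleGraph (Fin N)) {v : Fin N → Fin (2 * N)}
    (hv : Function.Injective v) : Sspin G v ⊆ jwSector (Set.range v) \ {0} := by
  rintro p ⟨k, l, hkl, hp⟩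
  have hne : v k ≠ v l := hv.ne hkl.ne
  have hmem (A : Fin 4) (hA : xbit A = 1) :
      ladderString (v k) (v l) A A ∈ jwSector (Set.range v) \ {0} :=
    ⟨ladderString_mem_jwSector (Set.mem_range_self k) (Set.mem_range_self l) hne hA hA,
      fun h => by
        simpa [ladderString, hA, show xbit 0 = 0 from rfl] using
          congrArg xbit (congrFun (Set.mem_singleton_iff.mp h) (v k))⟩
  rcases hp with rfl | rfl
  exacts [hmem 1 rfl, hmem 2 rfl]

theorem hamAlg_Sspin_le_pauliSpan_jwSector {N : ℕ} (G : SimpleGraph (Fin N))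
    {v : Fin N → Fin (2 * N)} (hv : Function.Injective v) :
    (hamAlg (Sspin G v) : Submodule ℝ _) ≤ pauliSpan (jwSector (Set.range v) \ {0}) :=
  hamAlg_toSubmodule_le_pauliSpan (Sspin_subset_jwSector G hv)
    fun _ hp _ hq => stringMul_mem_jwSector_diff_zero hp hq

end JordanWigner

theorem hamAlg_free_fermion_spin_decoupling_general (N : ℕ)
    (G : SimpleGraph (Fin N))
    (u d : Fin N → Fin (2 * N)) (hu : Function.Injective u) (hd : Function.Injective d)
    (hdisj : Disjoint (Set.range u) (Set.range d)) :
    (∀ x ∈ hamAlg (Sspin G u), ∀ y ∈ hamAlg (Sspin G d), Commute x y) ∧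
    hamAlg (Sfree G u d) = hamAlg (Sspin G u) ⊔ hamAlg (Sspin G d) ∧
    hamAlg (Sspin G u) ⊓ hamAlg (Sspin G d) = ⊥ ∧
    Module.finrank ℝ (hamAlg (Sfree G u d)) =
      Module.finrank ℝ (hamAlg (Sspin G u)) +
      Module.finrank ℝ (hamAlg (Sspin G d)) := by
  have hup := hamAlg_Sspin_le_pauliSpan_jwSector G hu
  have hdown := hamAlg_Sspin_le_pauliSpan_jwSector G hd
  have hcomm : ∀ x ∈ hamAlg (Sspin G u), ∀ y ∈ hamAlg (Sspin G d), Commute x y :=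
    fun x hx y hy => commute_of_mem_pauliSpan_jwSector hdisj (hup hx) (hdown hy)
  have hinf : hamAlg (Sspin G u) ⊓ hamAlg (Sspin G d) = ⊥ :=
    (LieSubalgebra.eq_bot_iff _).mpr fun x hx =>
      Submodule.disjoint_def.mp (disjoint_pauliSpan_jwSector hdisj) x (hup hx.1) (hdown hx.2)
  have hsup : hamAlg (Sfree G u d) = hamAlg (Sspin G u) ⊔ hamAlg (Sspin G d) :=
    hamAlg_union _ _
  refine ⟨hcomm, hsup, hinf, ?_⟩
  rw [hsup]
  exact LieSubalgebra.finrank_sup_of_lie_eq_zero (fun x hx y hy => (hcomm x hx y hy).lie_eq) hinf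

/-- Spin decoupling of the free-fermion Hamiltonian algebra: the spin-up and spin-down
algebras commute elementwise, jointly generate the full Hamiltonian algebra, intersect
trivially, and the dimensions add up. -/
theorem hamAlg_free_fermion_spin_decoupling (N : ℕ) (hN : 1 ≤ N)
    (G : SimpleGraph (Fin N)) (hG : G.Connected)
    (u d : Fin N → Fin (2 * N)) (hu : Function.Injective u) (hd : Function.Injective d)
    (hdisj : Disjoint (Set.range u) (Set.range d))
    (hunion : Set.range u ∪ Set.range d = Set.univ) :
    (∀ x ∈ hamAlg (Sspin G u), ∀ y ∈ hamAlg (Sspin G d), Commute x y) ∧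
    hamAlg (Sfree G u d) = hamAlg (Sspin G u) ⊔ hamAlg (Sspin G d) ∧
    hamAlg (Sspin G u) ⊓ hamAlg (Sspin G d) = ⊥ ∧
    Module.finrank ℝ (hamAlg (Sfree G u d)) =
      Module.finrank ℝ (hamAlg (Sspin G u)) +
      Module.finrank ℝ (hamAlg (Sspin G d)) :=
  hamAlg_free_fermion_spin_decoupling_general N G u d hu hd hdisj
end

section
/- Lemma 2 (rung strings lie in the Hamiltonian algebra): there exist choice functions a, b : Fin N → Fin 2 such that, with letters P^u_i, \bar P^u_i, P^d_i, \bar P^d_i as above, for every i with 1 ≤ i ≤ N−1 the matrices Complex.I • P(→X_{u(0)}(P^u_i)_{u(i)}), Complex.I • P(→Y_{u(0)}(\bar P^u_i)_{u(i)}), and their spin-down analogues lie in g(S₁), and in addition, for every i with 1 ≤ i ≤ N−2, the following four matrices lie in g(S₁): Complex.I • (P(Z_{d(0)}Z_{d(i)}) * P(→(P^u_i)_{u(i)}(\bar P^u_{i+1})_{u(i+1)})), Complex.I • (P(Z_{d(0)}Z_{d(i)}) * P(→(\bar P^u_i)_{u(i)}(P^u_{i+1})_{u(i+1)})), Complex.I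 • (P(Z_{u(0)}Z_{u(i)}) * P(→(P^d_i)_{d(i)}(\bar P^d_{i+1})_{d(i+1)})), and Complex.I • (P(Z_{u(0)}Z_{u(i)}) * P(→(\bar P^d_i)_{d(i)}(P^d_{i+1})_{d(i+1)})). (Each indicated product of Pauli-string matrices is itself a Pauli-string matrix, since the factors overlap only in Z or identity letters.) -/
open Matrix

attribute [local instance 100] LieRing.ofAssociativeRing

/-! Under the Jordan–Wigner map the strings `Z⋯Z X_j` and `Z⋯Z Y_j` are Majorana operators
`γ_(j,c)`: they square to one and pairwise anticommute, and every Pauli string of the statement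
is, up to a factor `±1` or `±i`, a product of Majoranas. The commutator of two even Majorana
monomials sharing exactly one Majorana is twice the monomial on the symmetric difference of
their supports, so the Lie algebra can be explored by set combinatorics.
A hopping term on an edge `kl` is the bilinear `γ_(k,c) γ_(l,c+1)`; chaining these along a walk
from site `0` to site `i` gives `γ_(0,s+1) γ_(i,a_i+s)`, where the letter `a_i` records the parity
of the walk. Bracketing the interaction `γ_(u0,0) γ_(u0,1) γ_(d0,0) γ_(d0,1)` with such bilinears
of both species moves its Majoranas from site `0` to other sites, and the bracket of two of the
resulting quartic monomials that share only `γ_(u0,t)` is a rung string. -/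

section Majorana

variable {ι R : Type*} [Ring R]

structure IsMajoranaFamily (γ : ι → R) : Prop where
  mul_self : ∀ a, γ a * γ a = 1
  anticomm : ∀ a b, a ≠ b → γ a * γ b = -(γ b * γ a)

def majProd (γ : ι → R) (L : List ι) : R := (L.map γ).prod

@[simp] lemma majProd_nil (γ : ι → R) : majProd γ [] = 1 := rfl

@[simp] lemma majProd_cons (γ : ι → R) (a : ι) (L : List ι) :
    majProd γ (a :: L) = γ a * majProd γ L := by
  simp [majProd]

@[simp] lemma majProd_append (γ : ι → R) (L₁ L₂ : List ι) :
    majProd γ (L₁ ++ L₂) = majProd γ L₁ * majProd γ L₂ := by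
  simp [majProd]

namespace IsMajoranaFamily

variable {γ : ι → R}

lemma mul_majProd_of_notMem (hγ : IsMajoranaFamily γ) {a : ι} {L : List ι} (h : a ∉ L) :
    γ a * majProd γ L = (-1 : ℤ) ^ L.length • (majProd γ L * γ a) := by
  induction L with
  | nil => simp
  | cons b L ih =>
    obtain ⟨hab, haL⟩ := List.ne_and_not_mem_of_not_mem_cons h
    rw [majProd_cons, ← mul_assoc, hγ.anticomm a b hab, neg_mul, mul_assoc, ih haL,
      mul_smul_comm, List.length_cons, pow_succ, mul_neg_one, neg_smul, mul_assoc]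

lemma majProd_mul_majProd_of_disjoint (hγ : IsMajoranaFamily γ) {L₁ L₂ : List ι}
    (h : L₁.Disjoint L₂) :
    majProd γ L₁ * majProd γ L₂ =
      (-1 : ℤ) ^ (L₁.length * L₂.length) • (majProd γ L₂ * majProd γ L₁) := by
  induction L₁ with
  | nil => simp
  | cons a L₁ ih =>
    rw [majProd_cons, mul_assoc, ih (List.disjoint_of_disjoint_cons_left h), mul_smul_comm,
      ← mul_assoc, hγ.mul_majProd_of_notMem (List.disjoint_cons_left.mp h).1, smul_mul_assoc,
      smul_smul, mul_assoc, ← pow_add, List.length_cons]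
    congr 2
    ring

lemma majProd_perm (hγ : IsMajoranaFamily γ) {L L' : List ι} (hp : L.Perm L')
    (hnd : L.Nodup) : majProd γ L' = majProd γ L ∨ majProd γ L' = -majProd γ L := by
  induction hp with
  | nil => exact Or.inl rfl
  | cons a _ ih =>
    rcases ih (List.nodup_cons.mp hnd).2 with h | h <;> simp [h]
  | swap a b L =>
    have hab : a ≠ b := fun e => by simp [e] at hnd
    right
    simp only [majProd_cons, ← mul_assoc, hγ.anticomm a b hab, neg_mul]
  | trans h₁ _ ih₁ ih₂ =>
    rcases ih₁ hnd with e₁ | e₁ <;> rcases ih₂ (h₁.nodup_iff.mp hnd) with e₂ | e₂ <;>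
      simp [e₁, e₂]

lemma lie_majProd (hγ : IsMajoranaFamily γ) {X Y : List ι} {s : ι}
    (hnd : (X ++ s :: Y).Nodup) (hev : Even ((X.length + 1) * (Y.length + 1))) :
    ⁅majProd γ (X ++ [s]), majProd γ (s :: Y)⁆ = (2 : ℤ) • majProd γ (X ++ Y) := by
  obtain ⟨hsX, hsY, hXY⟩ : s ∉ X ∧ s ∉ Y ∧ X.Disjoint Y := by
    simp only [List.nodup_append, List.nodup_cons, List.mem_cons] at hnd
    grind [List.Disjoint]
  have hsign : (-1 : ℤ) ^ (Y.length * X.length + X.length + Y.length) = -1 := by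
    refine Odd.neg_one_pow (Nat.odd_iff.mpr ?_)
    have : (X.length + 1) * (Y.length + 1) = Y.length * X.length + X.length + Y.length + 1 := by
      ring
    have := Nat.even_iff.mp hev
    omega
  have hXsY : majProd γ (X ++ [s]) * majProd γ (s :: Y) = majProd γ (X ++ Y) := by
    simp only [majProd_append, majProd_cons, majProd_nil, mul_one, mul_assoc,
      ← mul_assoc (γ s), hγ.mul_self, one_mul]
  have hsYX : majProd γ (s :: Y) * majProd γ (X ++ [s]) = -majProd γ (X ++ Y) := by
    simp only [majProd_append, majProd_cons, majProd_nil, mul_one]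
    rw [mul_assoc, ← mul_assoc _ (majProd γ X), hγ.majProd_mul_majProd_of_disjoint hXY.symm,
      smul_mul_assoc, mul_smul_comm, ← mul_assoc, ← mul_assoc, hγ.mul_majProd_of_notMem hsX,
      smul_mul_assoc, smul_mul_assoc, mul_assoc, mul_assoc, ← mul_assoc (γ s),
      hγ.mul_majProd_of_notMem hsY, smul_mul_assoc, mul_assoc, hγ.mul_self, mul_one,
      mul_smul_comm, smul_smul, smul_smul, ← pow_add, ← pow_add, hsign, neg_one_smul]
  rw [Ring.lie_def, hXsY, hsYX, sub_neg_eq_add, two_zsmul]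

end IsMajoranaFamily

end Majorana

section MonomialMem

open scoped symmDiff

lemma LieSubalgebra.two_zsmul_mem_iff {L : Type*} [LieRing L] [LieAlgebra ℝ L]
    {H : LieSubalgebra ℝ L} {x : L} : (2 : ℤ) • x ∈ H ↔ x ∈ H := by
  refine ⟨fun h => ?_, fun h => H.toSubmodule.toAddSubgroup.zsmul_mem h 2⟩
  have := H.smul_mem (2⁻¹ : ℝ) h
  rwa [← Int.cast_smul_eq_zsmul ℝ, smul_smul, Int.cast_ofNat, inv_mul_cancel₀ two_ne_zero,
    one_smul] at this

variable {ι m : Type*} [DecidableEq ι] [Fintype m] [DecidableEq m]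
  {H : LieSubalgebra ℝ (Matrix m m ℂ)}

lemma LieSubalgebra.neg_one_pow_smul_mem_iff (k : ℕ) {x : Matrix m m ℂ} :
    (-1 : ℂ) ^ k • x ∈ H ↔ x ∈ H := by
  rcases neg_one_pow_eq_or ℂ k with e | e <;> simp [e, neg_mem_iff]

/-- Evenness makes two such monomials that share exactly one Majorana anticommute. -/
def MonomialMem (H : LieSubalgebra ℝ (Matrix m m ℂ)) (γ : ι → Matrix m m ℂ) (c : ℂ)
    (S : Finset ι) : Prop :=
  Even S.card ∧ ∀ L : List ι, L.Nodup → L.toFinset = S → c • majProd γ L ∈ H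

namespace MonomialMem

variable {γ : ι → Matrix m m ℂ} {c c₁ c₂ : ℂ}

lemma of_list (hγ : IsMajoranaFamily γ) {L : List ι} (hL : L.Nodup) (he : Even L.length)
    (h : c • majProd γ L ∈ H) : MonomialMem H γ c L.toFinset := by
  refine ⟨by rwa [List.toFinset_card_of_nodup hL], fun L' hL' hS => ?_⟩
  rcases hγ.majProd_perm (List.perm_of_nodup_nodup_toFinset_eq hL hL' hS.symm) hL with e | e
  · rwa [e]
  · rw [e, smul_neg]
    exact neg_mem h

lemma symmDiff (hγ : IsMajoranaFamily γ) {A B : Finset ι} {s : ι} (hA : MonomialMem H γ c₁ A)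
    (hB : MonomialMem H γ c₂ B) (hAB : A ∩ B = {s}) : MonomialMem H γ (c₁ * c₂) (A ∆ B) := by
  have hsA : s ∈ A := (Finset.mem_inter.mp (hAB ▸ Finset.mem_singleton_self s)).1
  have hsB : s ∈ B := (Finset.mem_inter.mp (hAB ▸ Finset.mem_singleton_self s)).2
  set X := (A.erase s).toList
  set Y := (B.erase s).toList
  have hAB' : ∀ x, x ∈ A ∧ x ∈ B ↔ x = s := by simpa [Finset.ext_iff] using hAB
  have hnd : (X ++ s :: Y).Nodup := by
    simp only [List.nodup_append, List.nodup_cons, List.mem_cons, X, Y, Finset.nodup_toList,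
      Finset.mem_toList, Finset.mem_erase]
    grind
  have hX : c₁ • majProd γ (X ++ [s]) ∈ H :=
    hA.2 _ (hnd.sublist (by simp)) (by simp [X, Finset.insert_erase hsA])
  have hY : c₂ • majProd γ (s :: Y) ∈ H :=
    hB.2 _ (hnd.sublist (by simp)) (by simp [Y, Finset.insert_erase hsB])
  have hlen : X.length + 1 = A.card ∧ Y.length + 1 = B.card := by
    simp [X, Y, Finset.card_erase_add_one hsA, Finset.card_erase_add_one hsB]
  have hXY' : (X ++ Y).toFinset = A ∆ B := by
    ext x
    simp only [List.toFinset_append, Finset.mem_union, List.mem_toFinset, Finset.mem_toList,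
      Finset.mem_erase, Finset.mem_symmDiff, X, Y]
    grind
  rw [← hXY']
  refine of_list hγ (hnd.sublist (by simp)) ?_ ?_
  · obtain ⟨k, hk⟩ := hA.1
    obtain ⟨l, hl⟩ := hB.1
    exact ⟨k + l - 1, by rw [List.length_append]; omega⟩
  · have := H.lie_mem hX hY
    rwa [smul_lie, lie_smul, hγ.lie_majProd hnd (by rw [hlen.1, hlen.2]; exact hA.1.mul_right _),
      smul_smul, smul_comm _ (2 : ℤ), LieSubalgebra.two_zsmul_mem_iff] at this

end MonomialMem

end MonomialMem

section Pauli

def pauliPhase : Fin 4 → Fin 4 → ℕ :=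
  ![![0, 0, 0, 0], ![0, 0, 1, 3], ![0, 3, 0, 1], ![0, 1, 3, 0]]

lemma pauli_mul (a b : Fin 4) :
    pauli a * pauli b = Complex.I ^ pauliPhase a b • pauli (a ^^^ b) := by
  fin_cases a <;> fin_cases b <;>
    · ext i j
      fin_cases i <;> fin_cases j <;>
        simp [pauli, pauliPhase, Matrix.mul_apply, Fin.sum_univ_two, pow_succ]

lemma I_pow_pauliPhase_eq_neg_swap {a b : Fin 4} (ha : a ≠ 0) (hb : b ≠ 0) (hab : a ≠ b) :
    Complex.I ^ pauliPhase a b = -Complex.I ^ pauliPhase b a := by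
  fin_cases a <;> fin_cases b <;> simp_all [pauliPhase, pow_succ]

lemma pauliPhase_comm {a b : Fin 4} (h : a = 0 ∨ b = 0 ∨ a = b) :
    pauliPhase a b = pauliPhase b a := by
  revert a b; decide


variable {n : ℕ}

lemma PauliMat_mul_s10 (s t : Fin n → Fin 4) :
    PauliMat s * PauliMat t =
      (∏ k, Complex.I ^ pauliPhase (s k) (t k)) • PauliMat (fun k => s k ^^^ t k) := by
  ext x y
  calc (PauliMat s * PauliMat t) x y
      = ∑ z : Fin n → Fin 2, ∏ k, pauli (s k) (x k) (z k) * pauli (t k) (z k) (y k) := by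
        simp [Matrix.mul_apply, PauliMat, Finset.prod_mul_distrib]
    _ = ∏ k, (pauli (s k) * pauli (t k)) (x k) (y k) := by
        simp only [Matrix.mul_apply]
        rw [Finset.prod_univ_sum, Fintype.piFinset_univ]
    _ = _ := by
        simp [pauli_mul, PauliMat, Finset.prod_mul_distrib]

lemma PauliMat_zero : PauliMat (0 : Fin n → Fin 4) = 1 := by
  ext x y
  simp only [PauliMat, Matrix.of_apply, pauli, Matrix.one_apply]
  rw [Finset.prod_boole]
  simp [funext_iff]

lemma PauliMat_mul_of_phase_eq_zero {s t : Fin n → Fin 4} (j : Fin n)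
    (h : ∀ k ≠ j, pauliPhase (s k) (t k) = 0) :
    PauliMat s * PauliMat t =
      Complex.I ^ pauliPhase (s j) (t j) • PauliMat (fun k => s k ^^^ t k) := by
  rw [PauliMat_mul_s10, Finset.prod_eq_single j (fun k _ hk => by rw [h k hk, pow_zero]) (by simp)]

lemma PauliMat_anticomm {s t : Fin n → Fin 4} (j : Fin n) (hj : s j ≠ 0 ∧ t j ≠ 0 ∧ s j ≠ t j)
    (h : ∀ k ≠ j, s k = 0 ∨ t k = 0 ∨ s k = t k) :
    PauliMat s * PauliMat t = -(PauliMat t * PauliMat s) := by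
  have hxor : (fun k => t k ^^^ s k) = fun k => s k ^^^ t k := by
    funext k
    exact Fin.xor_comm _ _
  rw [PauliMat_mul_s10, PauliMat_mul_s10, hxor, ← neg_smul,
    ← Finset.mul_prod_erase _ _ (Finset.mem_univ j),
    ← Finset.mul_prod_erase _ _ (Finset.mem_univ j),
    I_pow_pauliPhase_eq_neg_swap hj.1 hj.2.1 hj.2.2,
    Finset.prod_congr rfl fun k hk => by rw [pauliPhase_comm (h k (Finset.ne_of_mem_erase hk))],
    neg_mul]

end Pauli

section JordanWigner

variable {n : ℕ}

lemma Fin.two_ne_add_one (c : Fin 2) : c ≠ c + 1 := by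
  fin_cases c <;> decide

lemma Fin.two_eq_or_eq_add_one (c s : Fin 2) : c = s ∨ c = s + 1 := by
  fin_cases c <;> fin_cases s <;> decide

lemma Fin.two_add_one_add_one (c : Fin 2) : c + 1 + 1 = c := by
  fin_cases c <;> rfl

def majString (j : Fin n) (c : Fin 2) : Fin n → Fin 4 :=
  fun k => if k < j then 3 else if k = j then ltr c else 0

noncomputable def majorana (a : Fin n × Fin 2) : Matrix (Fin n → Fin 2) (Fin n → Fin 2) ℂ :=
  PauliMat (majString a.1 a.2)

lemma ltr_ne_zero (c : Fin 2) : ltr c ≠ 0 := by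
  fin_cases c <;> decide

lemma ltr_ne_three (c : Fin 2) : ltr c ≠ 3 := by
  fin_cases c <;> decide

lemma ltr_injective : Function.Injective ltr := by
  decide

lemma ltrBar_eq_ltr_add_one (c : Fin 2) : ltrBar c = ltr (c + 1) := by
  fin_cases c <;> rfl

lemma majorana_anticomm_of_le {j j' : Fin n} {c c' : Fin 2} (h : (j, c) ≠ (j', c'))
    (hle : j ≤ j') :
    majorana (j, c) * majorana (j', c') = -(majorana (j', c') * majorana (j, c)) := by
  refine PauliMat_anticomm j ?_ fun k hk => ?_
  · rcases hle.lt_or_eq with hlt | rfl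
    · simp [majString, hlt, ltr_ne_zero, ltr_ne_three]
    · simpa [majString, ltr_ne_zero, ltr_injective.eq_iff] using h
  · rcases lt_or_gt_of_ne hk with hlt | hlt
    · simp [majString, hlt, hlt.trans_le hle]
    · simp [majString, hlt.not_gt, hk]

lemma isMajoranaFamily_majorana : IsMajoranaFamily (majorana (n := n)) where
  mul_self a := by
    have : (fun k => majString a.1 a.2 k ^^^ majString a.1 a.2 k) = 0 := by
      funext k
      exact Fin.xor_self _
    rw [majorana, PauliMat_mul_s10, this, PauliMat_zero]
    simp [show ∀ x : Fin 4, pauliPhase x x = 0 by decide]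
  anticomm a b h := by
    obtain ⟨j, c⟩ := a
    obtain ⟨j', c'⟩ := b
    rcases le_total j j' with hle | hle
    · exact majorana_anticomm_of_le h hle
    · rw [majorana_anticomm_of_le h.symm hle, neg_neg]

lemma majorana_mul_majorana_add_one (j : Fin n) (c : Fin 2) :
    majorana (j, c) * majorana (j, c + 1) =
      ((-1) ^ (c : ℕ) * Complex.I) • PauliMat (zString j) := by
  have hstr : (fun k => majString j c k ^^^ majString j (c + 1) k) = zString j := by
    funext k
    simp only [majString, zString]
    split_ifs <;> first | omega | (fin_cases c <;> rfl)
  rw [majorana, majorana, PauliMat_mul_of_phase_eq_zero j fun k hk => ?_, hstr]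
  · fin_cases c <;> simp [majString, ltr, pauliPhase, pow_succ]
  · simp only [majString]
    split_ifs <;> first | omega | rfl

lemma majorana_mul_majorana_of_lt {j l : Fin n} (hjl : j < l) (x y : Fin 2) :
    majorana (j, x + 1) * majorana (l, y) =
      ((-1) ^ (x : ℕ) * Complex.I) • PauliMat (ladderString j l (ltr x) (ltr y)) := by
  have hstr : (fun k => majString j (x + 1) k ^^^ majString l y k) =
      ladderString j l (ltr x) (ltr y) := by
    funext k
    simp only [majString, ladderString, min_eq_left hjl.le, max_eq_right hjl.le]
    split_ifs <;> first | omega | (fin_cases x <;> rfl) | (fin_cases y <;> rfl)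
  rw [majorana, majorana, PauliMat_mul_of_phase_eq_zero j fun k hk => ?_, hstr]
  · fin_cases x <;> simp [majString, hjl, ltr, pauliPhase, pow_succ]
  · simp only [majString]
    split_ifs <;> first | omega | rfl | (fin_cases y <;> rfl)

lemma PauliMat_zString_mul {k l : Fin n} (hkl : k ≠ l) :
    PauliMat (zString k) * PauliMat (zString l) = PauliMat (zzString k l) := by
  have hstr : (fun m => zString k m ^^^ zString l m) = zzString k l := by
    funext m
    simp only [zString, zzString]
    split_ifs <;> first | omega | rfl
  rw [PauliMat_mul_of_phase_eq_zero k fun m hm => ?_, hstr]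
  · simp [zString, hkl, pauliPhase]
  · simp only [zString]
    split_ifs <;> first | omega | rfl

lemma majProd_ladder {j l : Fin n} (hjl : j < l) (x y : Fin 2) :
    majProd majorana [(j, x + 1), (l, y)] =
      ((-1) ^ (x : ℕ) * Complex.I) • PauliMat (ladderString j l (ltr x) (ltr y)) := by
  rw [majProd_cons, majProd_cons, majProd_nil, mul_one, majorana_mul_majorana_of_lt hjl]

lemma majProd_zz {p q : Fin n} (hpq : p ≠ q) :
    majProd majorana [(p, 0), (p, 1), (q, 0), (q, 1)] = -PauliMat (zzString p q) := by
  calc majProd majorana [(p, 0), (p, 1), (q, 0), (q, 1)]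
      = (majorana (p, 0) * majorana (p, 0 + 1)) * (majorana (q, 0) * majorana (q, 0 + 1)) := by
        simp [mul_assoc]
    _ = -PauliMat (zzString p q) := by
        rw [majorana_mul_majorana_add_one, majorana_mul_majorana_add_one, smul_mul_smul_comm,
          PauliMat_zString_mul hpq]
        simp

variable {H : LieSubalgebra ℝ (Matrix (Fin n → Fin 2) (Fin n → Fin 2) ℂ)}

lemma smul_ladderString_mem_iff {j l : Fin n} (hjl : j < l) (x y : Fin 2) :
    Complex.I • PauliMat (ladderString j l (ltr x) (ltr y)) ∈ H ↔
      majProd majorana [(j, x + 1), (l, y)] ∈ H := by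
  rw [majProd_ladder hjl, ← smul_smul, LieSubalgebra.neg_one_pow_smul_mem_iff]

lemma smul_zzString_mem_iff {p q : Fin n} (hpq : p ≠ q) :
    Complex.I • PauliMat (zzString p q) ∈ H ↔
      Complex.I • majProd majorana [(p, 0), (p, 1), (q, 0), (q, 1)] ∈ H := by
  rw [majProd_zz hpq, smul_neg, neg_mem_iff]

lemma smul_zzString_mul_ladderString_mem_iff {p q j l : Fin n} (hpq : p ≠ q) (hjl : j < l)
    (x y : Fin 2) :
    Complex.I • (PauliMat (zzString p q) * PauliMat (ladderString j l (ltr x) (ltr y))) ∈ H ↔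
      majProd majorana [(p, 0), (p, 1), (q, 0), (q, 1), (j, x + 1), (l, y)] ∈ H := by
  rw [show [(p, 0), (p, 1), (q, 0), (q, 1), (j, x + 1), (l, y)] =
      [(p, 0), (p, 1), (q, 0), (q, 1)] ++ [(j, x + 1), (l, y)] from rfl, majProd_append,
    majProd_zz hpq, majProd_ladder hjl, neg_mul,
    mul_smul_comm, ← smul_smul, neg_mem_iff, LieSubalgebra.neg_one_pow_smul_mem_iff]

end JordanWigner

section HoppingChains

open scoped symmDiff Fin.NatCast

variable {n : ℕ} {H : LieSubalgebra ℝ (Matrix (Fin n → Fin 2) (Fin n → Fin 2) ℂ)}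

lemma ladderString_comm (i j : Fin n) (A : Fin 4) :
    ladderString i j A A = ladderString j i A A := by
  funext k
  simp only [ladderString, min_comm i j, max_comm i j]
  split_ifs <;> simp_all

lemma monomialMem_pair_of_hopping {p q : Fin n} (hpq : p ≠ q)
    (hX : Complex.I • PauliMat (ladderString p q 1 1) ∈ H)
    (hY : Complex.I • PauliMat (ladderString p q 2 2) ∈ H) (x : Fin 2) :
    MonomialMem H majorana 1 {(p, x), (q, x + 1)} := by
  have hgen : ∀ c, Complex.I • PauliMat (ladderString p q (ltr c) (ltr c)) ∈ H := by
    intro c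
    fin_cases c
    exacts [hX, hY]
  rcases hpq.lt_or_gt with hlt | hlt
  · have h := (smul_ladderString_mem_iff hlt (x + 1) (x + 1)).mp (hgen (x + 1))
    rw [Fin.two_add_one_add_one] at h
    simpa using MonomialMem.of_list isMajoranaFamily_majorana (by simp [hpq]) even_two
      (by rwa [one_smul] : (1 : ℂ) • majProd majorana [(p, x), (q, x + 1)] ∈ H)
  · have h := (smul_ladderString_mem_iff hlt x x).mp (ladderString_comm p q _ ▸ hgen x)
    simpa [Finset.pair_comm] using MonomialMem.of_list isMajoranaFamily_majorana
      (by simp [hpq.symm]) even_two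
      (by rwa [one_smul] : (1 : ℂ) • majProd majorana [(q, x + 1), (p, x)] ∈ H)

lemma monomialMem_pair_of_walk {V : Type*} {G : SimpleGraph V} {v : V → Fin n}
    (hv : Function.Injective v)
    (hedge : ∀ k l, G.Adj k l → ∀ x, MonomialMem H majorana 1 {(v k, x), (v l, x + 1)}) :
    ∀ {k l : V} (w : G.Walk k l) (x : Fin 2), (k, x) ≠ (l, x + (w.length : Fin 2)) →
      MonomialMem H majorana 1 {(v k, x), (v l, x + (w.length : Fin 2))} := by
  intro k l w
  induction w with
  | nil => simp
  | @cons k k' l hadj p ih =>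
    intro x hne
    have hlen : x + ((p.cons hadj).length : Fin 2) = x + 1 + p.length := by
      rw [SimpleGraph.Walk.length_cons]
      push_cast
      rw [add_comm _ 1, add_assoc]
    rw [hlen] at hne ⊢
    by_cases hk' : (k', x + 1) = (l, x + 1 + p.length)
    · obtain ⟨rfl, e⟩ := Prod.mk.inj hk'
      rw [← e]
      exact hedge k k' hadj x
    · have hx := Fin.two_ne_add_one x
      have hk'l : (v k', x + 1) ≠ (v l, x + 1 + p.length) := by
        simpa [hv.eq_iff] using hk'
      have hkl : (v k, x) ≠ (v l, x + 1 + p.length) := by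
        simpa [hv.eq_iff] using hne
      have h := (hedge k k' hadj x).symmDiff isMajoranaFamily_majorana (ih (x + 1) hk')
        (s := (v k', x + 1)) (by ext; simp; grind -ring)
      rw [one_mul] at h
      convert h using 1
      ext
      simp [Finset.mem_symmDiff]
      grind -ring

lemma SimpleGraph.Connected.exists_monomialMem_pair {V : Type*} {G : SimpleGraph V}
    (hG : G.Connected) (z : V) :
    ∃ a : V → Fin 2, ∀ {n : ℕ} (H : LieSubalgebra ℝ (Matrix (Fin n → Fin 2) (Fin n → Fin 2) ℂ))
      (v : V → Fin n), Function.Injective v →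
      (∀ k l, G.Adj k l → ∀ x, MonomialMem H majorana 1 {(v k, x), (v l, x + 1)}) →
      ∀ i ≠ z, ∀ s, MonomialMem H majorana 1 {(v z, s + 1), (v i, a i + s)} := by
  refine ⟨fun i => ((hG.preconnected z i).some.length : Fin 2) + 1, ?_⟩
  intro n H v hv hedge i hi s
  convert monomialMem_pair_of_walk hv hedge (hG.preconnected z i).some (s + 1)
    (by simp [Ne.symm hi]) using 4
  grind

end HoppingChains

section Rungs

open scoped symmDiff

variable {n : ℕ} {V : Type*}

structure HoppingInteractionData (H : LieSubalgebra ℝ (Matrix (Fin n → Fin 2) (Fin n → Fin 2) ℂ))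
    (v w : V → Fin n) (z : V) (a : V → Fin 2) : Prop where
  injective_left : Function.Injective v
  injective_right : Function.Injective w
  left_ne_right : ∀ k l, v k ≠ w l
  pair_left : ∀ i ≠ z, ∀ s, MonomialMem H majorana 1 {(v z, s + 1), (v i, a i + s)}
  pair_right : ∀ i ≠ z, ∀ s, MonomialMem H majorana 1 {(w z, s + 1), (w i, a i + s)}
  interaction : MonomialMem H majorana Complex.I ({v z, w z} ×ˢ Finset.univ)

namespace HoppingInteractionData

variable {H : LieSubalgebra ℝ (Matrix (Fin n → Fin 2) (Fin n → Fin 2) ℂ)} {v w : V → Fin n}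
  {z : V} {a : V → Fin 2}

lemma symm (h : HoppingInteractionData H v w z a) : HoppingInteractionData H w v z a where
  injective_left := h.injective_right
  injective_right := h.injective_left
  left_ne_right k l := (h.left_ne_right l k).symm
  pair_left := h.pair_right
  pair_right := h.pair_left
  interaction := Finset.pair_comm (v z) (w z) ▸ h.interaction

lemma monomialMem_quartic (h : HoppingInteractionData H v w z a) {k l : V} (hk : k ≠ z) (hl : l ≠ z)
    (s t : Fin 2) :
    MonomialMem H majorana Complex.I {(v k, a k + s), (v z, s), (w z, t), (w l, a l + t)} := by
  have hvk : v k ≠ v z := h.injective_left.ne hk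
  have hwl : w l ≠ w z := h.injective_right.ne hl
  have hvw := h.left_ne_right
  have hs := Fin.two_ne_add_one s
  have ht := Fin.two_ne_add_one t
  have h₁ := h.interaction.symmDiff isMajoranaFamily_majorana (h.pair_left k hk s)
    (s := (v z, s + 1)) (by ext; simp; grind -ring)
  have h₂ := h₁.symmDiff isMajoranaFamily_majorana (h.pair_right l hl t)
    (s := (w z, t + 1)) (by ext; simp [Finset.mem_symmDiff]; grind -ring)
  rw [mul_one, mul_one] at h₂
  convert h₂ using 1
  ext ⟨x, c⟩
  have := Fin.two_eq_or_eq_add_one c s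
  have := Fin.two_eq_or_eq_add_one c t
  simp [Finset.mem_symmDiff]
  grind -ring

lemma monomialMem_rung (h : HoppingInteractionData H v w z a) {i j : V} (hi : i ≠ z) (hj : j ≠ z)
    (hij : i ≠ j) (t : Fin 2) :
    MonomialMem H majorana (-1)
      ({w z, w i} ×ˢ Finset.univ ∪ {(v i, a i + t), (v j, a j + t)}) := by
  have hvi : v i ≠ v z := h.injective_left.ne hi
  have hvj : v j ≠ v z := h.injective_left.ne hj
  have hvij : v i ≠ v j := h.injective_left.ne hij
  have hwi : w i ≠ w z := h.injective_right.ne hi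
  have hvw := h.left_ne_right
  have h' := (h.monomialMem_quartic hi hi t 0).symmDiff isMajoranaFamily_majorana (h.monomialMem_quartic hj hi t 1)
    (s := (v z, t)) (by ext; simp; grind -ring)
  rw [Complex.I_mul_I] at h'
  convert h' using 1
  ext ⟨x, c⟩
  have : c = 0 ∨ c = 1 := by fin_cases c <;> simp
  have := Fin.two_ne_add_one (a i)
  simp [Finset.mem_symmDiff]
  grind -ring

lemma smul_longString_mem (h : HoppingInteractionData H v w z a) {i : V} (hi : i ≠ z)
    (hzi : v z < v i) :
    Complex.I • PauliMat (ladderString (v z) (v i) 1 (ltr (a i))) ∈ H ∧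
      Complex.I • PauliMat (ladderString (v z) (v i) 2 (ltrBar (a i))) ∈ H := by
  have hvi : v z ≠ v i := hzi.ne
  rw [show (1 : Fin 4) = ltr 0 from rfl, show (2 : Fin 4) = ltr 1 from rfl,
    ltrBar_eq_ltr_add_one, smul_ladderString_mem_iff hzi, smul_ladderString_mem_iff hzi]
  constructor
  · simpa using (h.pair_left i hi 0).2 [(v z, 0 + 1), (v i, a i)] (by simp [hvi]) (by simp)
  · simpa using (h.pair_left i hi 1).2 [(v z, 1 + 1), (v i, a i + 1)] (by simp [hvi]) (by simp)

lemma smul_rungString_mem (h : HoppingInteractionData H v w z a) {i j : V} (hi : i ≠ z)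
    (hj : j ≠ z) (hij : v i < v j) :
    Complex.I • (PauliMat (zzString (w z) (w i)) *
        PauliMat (ladderString (v i) (v j) (ltr (a i)) (ltrBar (a j)))) ∈ H ∧
      Complex.I • (PauliMat (zzString (w z) (w i)) *
        PauliMat (ladderString (v i) (v j) (ltrBar (a i)) (ltr (a j)))) ∈ H := by
  have hwi : w z ≠ w i := h.injective_right.ne (Ne.symm hi)
  have hvij : v i ≠ v j := hij.ne
  rw [ltrBar_eq_ltr_add_one, ltrBar_eq_ltr_add_one, smul_zzString_mul_ladderString_mem_iff hwi hij,
    smul_zzString_mul_ladderString_mem_iff hwi hij, Fin.two_add_one_add_one]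
  have hwv : ∀ k l, w k ≠ v l := fun k l => (h.left_ne_right l k).symm
  have hrung (t : Fin 2) : majProd majorana
      [(w z, 0), (w z, 1), (w i, 0), (w i, 1), (v i, a i + t), (v j, a j + t)] ∈ H := by
    have := (h.monomialMem_rung hi hj (fun e => hvij (congrArg v e)) t).2
      [(w z, 0), (w z, 1), (w i, 0), (w i, 1), (v i, a i + t), (v j, a j + t)]
      (by simp [hwi, hvij, hwv])
      (by ext ⟨x, c⟩; have : c = 0 ∨ c = 1 := by fin_cases c <;> simp
          simp; grind -ring)
    rwa [neg_one_smul, neg_mem_iff] at this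
  exact ⟨hrung 1, by simpa using hrung 0⟩

end HoppingInteractionData

end Rungs

section HamiltonianAlgebra

variable {n N : ℕ}

lemma smul_PauliMat_mem_hamAlg {S : Set (Fin n → Fin 4)} {p : Fin n → Fin 4} (hp : p ∈ S) :
    Complex.I • PauliMat p ∈ hamAlg S :=
  LieSubalgebra.subset_lieSpan ⟨p, hp, rfl⟩

lemma monomialMem_hamAlg_of_adj {G : SimpleGraph (Fin N)} {S : Set (Fin (2 * N) → Fin 4)}
    {v : Fin N → Fin (2 * N)} (hv : Function.Injective v) (hS : Sspin G v ⊆ S) {k l : Fin N}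
    (hkl : G.Adj k l) (x : Fin 2) :
    MonomialMem (hamAlg S) majorana 1 {(v k, x), (v l, x + 1)} :=
  monomialMem_pair_of_hopping (hv.ne hkl.ne)
    (smul_PauliMat_mem_hamAlg (hS ⟨k, l, hkl, Or.inl rfl⟩))
    (smul_PauliMat_mem_hamAlg (hS ⟨k, l, hkl, Or.inr rfl⟩)) x

lemma monomialMem_hamAlg_of_zzString_mem {S : Set (Fin n → Fin 4)} {p q : Fin n} (hpq : p ≠ q)
    (hS : zzString p q ∈ S) :
    MonomialMem (hamAlg S) majorana Complex.I ({p, q} ×ˢ Finset.univ) := by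
  convert MonomialMem.of_list isMajoranaFamily_majorana (L := [(p, 0), (p, 1), (q, 0), (q, 1)])
    (by simp [hpq]) ⟨2, rfl⟩ ((smul_zzString_mem_iff hpq).mp (smul_PauliMat_mem_hamAlg hS))
  ext ⟨x, c⟩
  fin_cases c <;> simp

end HamiltonianAlgebra

/-- Lemma 2: there are choices of X/Y letters `a i` (spin up) and `b i` (spin down)
such that the long strings `→X_{u 0}P^u_i`, `→Y_{u 0}\bar P^u_i` (and spin-down
analogues) lie in `g(S₁)`, and moreover the rung strings
`Z_{d 0}Z_{d i}·→P^u_i \bar P^u_{i+1}`, `Z_{d 0}Z_{d i}·→\bar P^u_i P^u_{i+1}`,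
`Z_{u 0}Z_{u i}·→P^d_i \bar P^d_{i+1}`, `Z_{u 0}Z_{u i}·→\bar P^d_i P^d_{i+1}`
lie in `g(S₁)`. -/
theorem rung_strings_mem_hamAlg (N : ℕ) (hN : 1 ≤ N)
    (G : SimpleGraph (Fin N)) (hG : G.Connected)
    (u d : Fin N → Fin (2 * N)) (hu : StrictMono u) (hd : StrictMono d)
    (hdisj : Disjoint (Set.range u) (Set.range d)) :
    ∃ a b : Fin N → Fin 2,
      (∀ i : Fin N, 1 ≤ i.val →
        (Complex.I • PauliMat (ladderString (u ⟨0, hN⟩) (u i) 1 (ltr (a i))) ∈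
            hamAlg (Sint G u d ⟨0, hN⟩) ∧
         Complex.I • PauliMat (ladderString (u ⟨0, hN⟩) (u i) 2 (ltrBar (a i))) ∈
            hamAlg (Sint G u d ⟨0, hN⟩) ∧
         Complex.I • PauliMat (ladderString (d ⟨0, hN⟩) (d i) 1 (ltr (b i))) ∈
            hamAlg (Sint G u d ⟨0, hN⟩) ∧
         Complex.I • PauliMat (ladderString (d ⟨0, hN⟩) (d i) 2 (ltrBar (b i))) ∈
            hamAlg (Sint G u d ⟨0, hN⟩))) ∧
      (∀ i : ℕ, ∀ _h1 : 1 ≤ i, ∀ h2 : i + 1 < N,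
        (Complex.I • (PauliMat (zzString (d ⟨0, hN⟩) (d ⟨i, by omega⟩)) *
              PauliMat (ladderString (u ⟨i, by omega⟩) (u ⟨i + 1, h2⟩)
                (ltr (a ⟨i, by omega⟩)) (ltrBar (a ⟨i + 1, h2⟩)))) ∈
            hamAlg (Sint G u d ⟨0, hN⟩) ∧
         Complex.I • (PauliMat (zzString (d ⟨0, hN⟩) (d ⟨i, by omega⟩)) *
              PauliMat (ladderString (u ⟨i, by omega⟩) (u ⟨i + 1, h2⟩)
                (ltrBar (a ⟨i, by omega⟩)) (ltr (a ⟨i + 1, h2⟩)))) ∈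
            hamAlg (Sint G u d ⟨0, hN⟩) ∧
         Complex.I • (PauliMat (zzString (u ⟨0, hN⟩) (u ⟨i, by omega⟩)) *
              PauliMat (ladderString (d ⟨i, by omega⟩) (d ⟨i + 1, h2⟩)
                (ltr (b ⟨i, by omega⟩)) (ltrBar (b ⟨i + 1, h2⟩)))) ∈
            hamAlg (Sint G u d ⟨0, hN⟩) ∧
         Complex.I • (PauliMat (zzString (u ⟨0, hN⟩) (u ⟨i, by omega⟩)) *
              PauliMat (ladderString (d ⟨i, by omega⟩) (d ⟨i + 1, h2⟩)
                (ltrBar (b ⟨i, by omega⟩)) (ltr (b ⟨i + 1, h2⟩)))) ∈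
            hamAlg (Sint G u d ⟨0, hN⟩))) := by
  set z : Fin N := ⟨0, hN⟩
  have hud : ∀ k l, u k ≠ d l := fun k l e => Set.disjoint_left.mp hdisj ⟨k, rfl⟩ ⟨l, e.symm⟩
  obtain ⟨a, ha⟩ := hG.exists_monomialMem_pair z
  have h : HoppingInteractionData (hamAlg (Sint G u d z)) u d z a :=
    { injective_left := hu.injective
      injective_right := hd.injective
      left_ne_right := hud
      pair_left := ha _ u hu.injective fun _ _ hkl => monomialMem_hamAlg_of_adj hu.injective
        (Set.subset_union_left.trans Set.subset_union_left) hkl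
      pair_right := ha _ d hd.injective fun _ _ hkl => monomialMem_hamAlg_of_adj hd.injective
        (Set.subset_union_right.trans Set.subset_union_left) hkl
      interaction := monomialMem_hamAlg_of_zzString_mem (hud z z) (Set.mem_union_right _ rfl) }
  refine ⟨a, a, fun i hi => ?_, fun i hi hi' => ?_⟩
  · have hiz : i ≠ z := fun e => by simp [e, z] at hi
    have hzi : z < i := Fin.lt_def.mpr hi
    exact and_assoc.mp
      ⟨h.smul_longString_mem hiz (hu hzi), h.symm.smul_longString_mem hiz (hd hzi)⟩
  · have hiz : (⟨i, by omega⟩ : Fin N) ≠ z := by simp [z, Fin.ext_iff]; omega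
    have hjz : (⟨i + 1, hi'⟩ : Fin N) ≠ z := by simp [z, Fin.ext_iff]
    have hij : (⟨i, by omega⟩ : Fin N) < ⟨i + 1, hi'⟩ := Fin.lt_def.mpr (Nat.lt_succ_self i)
    exact and_assoc.mp
      ⟨h.smul_rungString_mem hiz hjz (hu hij), h.symm.smul_rungString_mem hiz hjz (hd hij)⟩
end
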